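/- (Theorem 2.3) Let R be a commutative ring and let h, j : ℕ → R be sequences with h 0 = 1 and j 1 = 1 satisfying equation (D1): n·h_n = Σ_{r=1}^{n} j_r · h_{n-r} for all n ≥ 1. For n ≥ 1 let J_n(j̄) be the n×n matrix over R whose entry in row i and column k (1 ≤ i,k ≤ n) equals j_{i-k+1} if k ≤ i, equals -(i·1_R) if k = i+1, and equals 0 if k > i+1. Then the characteristic polynomial of J_n(j̄) satisfies χ(J_n(j̄))(x) = Σ_{r=0}^{n} C(n,r) · (r!) · h_r · (-1)^r · x^{n-r} in R[x]. -/
import Mathlib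


open Polynomial

/-- The matrix `J_n(j̄)`: entries `j (i - k + 1)` in (1-based) row `i`, column `k` for
`k ≤ i`, superdiagonal entry `-i` in row `i`, column `i + 1`, and `0` above the
superdiagonal. -/
def Jmat {R : Type*} [CommRing R] (j : ℕ → R) (n : ℕ) : Matrix (Fin n) (Fin n) R :=
  Matrix.of fun i k =>
    if (k : ℕ) ≤ (i : ℕ) then j ((i : ℕ) - (k : ℕ) + 1)
    else if (k : ℕ) = (i : ℕ) + 1 then -(((i : ℕ) + 1 : ℕ) : R)
    else 0

section CharpolyJmatAux

open Matrix Finset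

variable {R : Type*} [CommRing R]

/-- Auxiliary: the claimed value of the characteristic polynomial. -/
noncomputable def Php (h : ℕ → R) (n : ℕ) : R[X] :=
  ∑ r ∈ Finset.range (n+1),
    (n.choose r * r.factorial) • (Polynomial.C (h r) * (-1 : R[X])^r * (X : R[X])^(n-r))

lemma Jmat.corner (j : ℕ → R) (n : ℕ) :
    (charmatrix (Jmat j (n+1))).submatrix Fin.castSucc Fin.castSucc
      = charmatrix (Jmat j n) := by
  ext i k
  by_cases hik : i = k
  · subst hik; simp [charmatrix_apply_eq, Jmat]
  · have : (Fin.castSucc i) ≠ (Fin.castSucc k) := by simpa using hik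
    simp [charmatrix_apply_ne _ _ _ hik, charmatrix_apply_ne _ _ _ this, Jmat]

lemma Jmat.minor_det (j : ℕ → R) (n : ℕ) (k : Fin (n+1)) :
    ((charmatrix (Jmat j (n+1))).submatrix Fin.castSucc k.succAbove).det
      = (∏ i ∈ Finset.Ioc (k:ℕ) n, (i : R[X])) * (Jmat j (k:ℕ)).charpoly := by
  induction n with
  | zero =>
    have hk : k = 0 := Fin.fin_one_eq_zero k
    subst hk
    simp [Matrix.charpoly, Matrix.det_isEmpty]
  | succ m ih =>
    rcases Fin.eq_castSucc_or_eq_last k with ⟨k', rfl⟩ | rfl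
    · -- expand along last column
      set A := (charmatrix (Jmat j (m+2))).submatrix Fin.castSucc
          (Fin.castSucc k').succAbove with hA
      have hAdet : A.det = ∑ i : Fin (m+1),
          (-1)^((i:ℕ) + (Fin.last m : ℕ)) * A i (Fin.last m) *
            (A.submatrix i.succAbove (Fin.last m).succAbove).det :=
        Matrix.det_succ_column A (Fin.last m)
      have hcolzero : ∀ i : Fin (m+1), i ≠ Fin.last m → A i (Fin.last m) = 0 := by
        intro i hi
        have hival : (i : ℕ) < m := by
          have h1 := i.isLt
          have : (i : ℕ) ≠ m := fun hc => hi (Fin.ext (by simp [hc]))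
          omega
        have hcol : (Fin.castSucc k').succAbove (Fin.last m) = Fin.last (m+1) := by
          rw [Fin.succAbove_of_le_castSucc]
          · rfl
          · exact Fin.castSucc_le_castSucc_iff.mpr (Fin.le_last k')
        have hne : (Fin.castSucc i) ≠ Fin.last (m+1) := by
          intro hc
          have : (i : ℕ) = m + 1 := by simpa using congrArg Fin.val hc
          omega
        rw [hA]
        simp only [Matrix.submatrix_apply, hcol]
        rw [charmatrix_apply_ne _ _ _ hne]
        have : Jmat j (m+2) (Fin.castSucc i) (Fin.last (m+1)) = 0 := by
          simp only [Jmat, Matrix.of_apply, Fin.coe_castSucc, Fin.val_last]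
          rw [if_neg (by omega), if_neg (by omega)]
        rw [this, map_zero, neg_zero]
      have hcollast : A (Fin.last m) (Fin.last m) = Polynomial.C (((m+1 : ℕ)) : R) := by
        have hcol : (Fin.castSucc k').succAbove (Fin.last m) = Fin.last (m+1) := by
          rw [Fin.succAbove_of_le_castSucc]
          · rfl
          · exact Fin.castSucc_le_castSucc_iff.mpr (Fin.le_last k')
        have hne : (Fin.castSucc (Fin.last m)) ≠ Fin.last (m+1) := by
          intro hc
          have : (m : ℕ) = m + 1 := by simpa using congrArg Fin.val hc
          omega
        rw [hA]
        simp only [Matrix.submatrix_apply, hcol]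
        rw [charmatrix_apply_ne _ _ _ hne]
        have : Jmat j (m+2) (Fin.castSucc (Fin.last m)) (Fin.last (m+1))
            = -(((m+1 : ℕ)) : R) := by
          simp only [Jmat, Matrix.of_apply, Fin.coe_castSucc, Fin.val_last]
          rw [if_neg (by omega)]
          simp
        rw [this, map_neg, neg_neg]
      have hsub : A.submatrix (Fin.last m).succAbove (Fin.last m).succAbove
          = (charmatrix (Jmat j (m+1))).submatrix Fin.castSucc k'.succAbove := by
        ext i c
        rw [← Jmat.corner j (m+1)]
        simp only [hA, Matrix.submatrix_apply, Fin.succAbove_last,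
          Fin.castSucc_succAbove_castSucc]
      rw [hAdet, Finset.sum_eq_single (Fin.last m)]
      · rw [hcollast, hsub, ih k']
        have hprod : (∏ i ∈ Finset.Ioc ((Fin.castSucc k' : Fin (m+2)) : ℕ) (m+1), (i : R[X]))
            = (∏ i ∈ Finset.Ioc (k' : ℕ) m, (i : R[X])) * ((m+1 : ℕ) : R[X]) := by
          rw [Fin.coe_castSucc, Finset.prod_Ioc_succ_top (Nat.lt_succ_iff.mp k'.isLt)]
        have hsign : ((-1 : R[X]))^((Fin.last m : ℕ) + (Fin.last m : ℕ)) = 1 := by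
          rw [Fin.val_last, ← two_mul, pow_mul]; norm_num
        rw [hsign, one_mul, hprod, Polynomial.C_eq_natCast, Fin.coe_castSucc]
        ring
      · intro i _ hi
        rw [hcolzero i hi]; ring
      · intro hmem; exact absurd (Finset.mem_univ _) hmem
    · simp only [Fin.succAbove_last, Jmat.corner, Fin.val_last]
      rw [Finset.Ioc_self, Finset.prod_empty, one_mul, Matrix.charpoly]

lemma Jmat.charpoly_rec (j : ℕ → R) (n : ℕ) :
    (Jmat j (n+1)).charpoly
      = ∑ k ∈ Finset.range (n+1), (-1 : R[X])^(n + k) *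
          (if k = n then X - Polynomial.C (j 1) else -Polynomial.C (j (n - k + 1))) *
          ((∏ i ∈ Finset.Ioc k n, (i : R[X])) * (Jmat j k).charpoly) := by
  rw [Matrix.charpoly, Matrix.det_succ_row _ (Fin.last n)]
  rw [← Fin.sum_univ_eq_sum_range]
  apply Finset.sum_congr rfl
  intro k _
  rw [Fin.succAbove_last, Jmat.minor_det j n k, Fin.val_last]
  congr 1
  congr 1
  by_cases hk : (k : ℕ) = n
  · have hkl : k = Fin.last n := Fin.ext (by simpa using hk)
    subst hkl
    simp only [Fin.val_last, if_pos rfl, charmatrix_apply_eq]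
    congr 2
    simp [Jmat]
  · have hne : Fin.last n ≠ k := fun hc => hk (by simpa using (congrArg Fin.val hc).symm)
    rw [if_neg hk, charmatrix_apply_ne _ _ _ hne]
    congr 2
    simp only [Jmat, Matrix.of_apply, Fin.val_last]
    rw [if_pos (by omega : (k:ℕ) ≤ n)]

lemma prodIoc_mul_factorial (k n : ℕ) (h : k ≤ n) :
    (∏ i ∈ Finset.Ioc k n, i) * k.factorial = n.factorial := by
  induction n with
  | zero => interval_cases k; simp
  | succ m ih =>
    rcases Nat.eq_or_lt_of_le h with rfl | hlt
    · simp
    · have hk : k ≤ m := Nat.lt_succ_iff.mp hlt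
      rw [Finset.prod_Ioc_succ_top hk, Nat.factorial_succ]
      rw [mul_right_comm, ih hk]; ring

lemma coeff_transfer (r k n : ℕ) (hrk : r ≤ k) (hkn : k ≤ n) :
    (∏ i ∈ Finset.Ioc k n, i) * (k.choose r * r.factorial)
      = n.choose (n - k + r) * (n - k + r).factorial := by
  apply Nat.eq_of_mul_eq_mul_right (Nat.factorial_pos (k - r))
  have h1 : n - (n - k + r) = k - r := by omega
  have h2 : n - k + r ≤ n := by omega
  calc (∏ i ∈ Finset.Ioc k n, i) * (k.choose r * r.factorial) * (k - r).factorial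
      = (∏ i ∈ Finset.Ioc k n, i) * (k.choose r * r.factorial * (k - r).factorial) := by ring
    _ = (∏ i ∈ Finset.Ioc k n, i) * k.factorial := by
        rw [Nat.choose_mul_factorial_mul_factorial hrk]
    _ = n.factorial := prodIoc_mul_factorial k n hkn
    _ = n.choose (n - k + r) * (n - k + r).factorial * (n - (n - k + r)).factorial :=
        (Nat.choose_mul_factorial_mul_factorial h2).symm
    _ = n.choose (n - k + r) * (n - k + r).factorial * (k - r).factorial := by rw [h1]

lemma Php.pointwise (h j : ℕ → R) (n k r : ℕ) (hrk : r ≤ k) (hkn : k ≤ n) :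
    (-1 : R[X])^(n+k+1) * Polynomial.C (j (n+1-k)) *
      ((∏ i ∈ Finset.Ioc k n, (i : R[X])) *
        ((k.choose r * r.factorial) • (Polynomial.C (h r) * (-1 : R[X])^r * (X:R[X])^(k-r))))
    = (n.choose (n-k+r) * (n-k+r).factorial) •
        (Polynomial.C (j (n+1-k) * h r) * (-1 : R[X])^(n-k+r+1) * (X:R[X])^(k-r)) := by
  have hsign : ((-1 : R[X]))^(n+k+1) * (-1 : R[X])^r = (-1 : R[X])^(n-k+r+1) := by
    rw [← pow_add, show n+k+1+r = (n-k+r+1) + 2*k by omega, pow_add, pow_mul,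
      neg_one_sq, one_pow, mul_one]
  have hprod : (∏ i ∈ Finset.Ioc k n, (i : R[X])) = ((∏ i ∈ Finset.Ioc k n, i : ℕ) : R[X]) := by
    push_cast; rfl
  rw [hprod, nsmul_eq_mul, nsmul_eq_mul, _root_.map_mul]
  rw [← hsign, ← coeff_transfer r k n hrk hkn]
  push_cast
  ring

lemma Php.sum_S_eq (h j : ℕ → R)
    (hD : ∀ m : ℕ, 1 ≤ m → m • h m = ∑ r ∈ Finset.Icc 1 m, j r * h (m - r)) (n : ℕ) :
    (∑ k ∈ Finset.range (n+1), (-1 : R[X])^(n+k+1) * Polynomial.C (j (n+1-k)) *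
        ((∏ i ∈ Finset.Ioc k n, (i : R[X])) * Php h k))
    = ∑ s ∈ Finset.Icc 1 (n+1),
        (n.choose (s-1) * s.factorial) •
          (Polynomial.C (h s) * (-1 : R[X])^s * (X:R[X])^(n+1-s)) := by
  have hRHS : ∀ s ∈ Finset.Icc 1 (n+1),
      (n.choose (s-1) * s.factorial) •
          (Polynomial.C (h s) * (-1 : R[X])^s * (X:R[X])^(n+1-s))
      = ∑ t ∈ Finset.Icc 1 s, (n.choose (s-1) * (s-1).factorial) •
          (Polynomial.C (j t * h (s-t)) * (-1 : R[X])^s * (X:R[X])^(n+1-s)) := by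
    intro s hs
    obtain ⟨hs1, hs2⟩ := Finset.mem_Icc.mp hs
    have hfac : n.choose (s-1) * s.factorial = n.choose (s-1) * (s-1).factorial * s := by
      conv_lhs => rw [show s = (s-1)+1 by omega]
      rw [Nat.factorial_succ, show s - 1 + 1 = s by omega]; ring
    rw [hfac, mul_smul]
    have e1 : s • (Polynomial.C (h s) * (-1 : R[X])^s * (X:R[X])^(n+1-s))
        = Polynomial.C (s • h s) * (-1 : R[X])^s * (X:R[X])^(n+1-s) := by
      rw [map_nsmul, smul_mul_assoc, smul_mul_assoc]
    rw [e1, hD s hs1, map_sum, Finset.sum_mul, Finset.sum_mul, Finset.smul_sum]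
  rw [Finset.sum_congr rfl hRHS]
  have hLHS : ∀ k ∈ Finset.range (n+1),
      (-1 : R[X])^(n+k+1) * Polynomial.C (j (n+1-k)) *
        ((∏ i ∈ Finset.Ioc k n, (i : R[X])) * Php h k)
      = ∑ r ∈ Finset.range (k+1),
          (-1 : R[X])^(n+k+1) * Polynomial.C (j (n+1-k)) *
            ((∏ i ∈ Finset.Ioc k n, (i : R[X])) *
              ((k.choose r * r.factorial) •
                (Polynomial.C (h r) * (-1 : R[X])^r * (X:R[X])^(k-r)))) := by
    intro k _
    rw [Php, Finset.mul_sum, Finset.mul_sum]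
  rw [Finset.sum_congr rfl hLHS]
  rw [Finset.sum_sigma', Finset.sum_sigma']
  refine Finset.sum_nbij' (fun p => ⟨n-p.1+p.2+1, n+1-p.1⟩) (fun q => ⟨n+1-q.2, q.1-q.2⟩)
    ?_ ?_ ?_ ?_ ?_
  · rintro ⟨k, r⟩ hp
    simp only [Finset.mem_sigma, Finset.mem_range, Finset.mem_Icc] at hp ⊢
    omega
  · rintro ⟨s, t⟩ hq
    simp only [Finset.mem_sigma, Finset.mem_range, Finset.mem_Icc] at hq ⊢
    omega
  · rintro ⟨k, r⟩ hp
    simp only [Finset.mem_sigma, Finset.mem_range] at hp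
    simp only [Sigma.mk.inj_iff]
    constructor
    · omega
    · exact heq_of_eq (by omega)
  · rintro ⟨s, t⟩ hq
    simp only [Finset.mem_sigma, Finset.mem_Icc] at hq
    simp only [Sigma.mk.inj_iff]
    constructor
    · omega
    · exact heq_of_eq (by omega)
  · rintro ⟨k, r⟩ hp
    simp only [Finset.mem_sigma, Finset.mem_range] at hp
    obtain ⟨hk, hr⟩ := hp
    have hrk : r ≤ k := by omega
    have hkn : k ≤ n := by omega
    rw [Php.pointwise h j n k r hrk hkn]
    have e1 : n - k + r + 1 - 1 = n - k + r := by omega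
    have e2 : (n - k + r + 1) - (n + 1 - k) = r := by omega
    have e3 : n + 1 - (n - k + r + 1) = k - r := by omega
    rw [e1, e2, e3]

lemma Php.key_identity (h j : ℕ → R)
    (hD : ∀ m : ℕ, 1 ≤ m → m • h m = ∑ r ∈ Finset.Icc 1 m, j r * h (m - r)) (n : ℕ) :
    Php h (n+1) = X * Php h n +
      ∑ k ∈ Finset.range (n+1), (-1 : R[X])^(n+k+1) * Polynomial.C (j (n+1-k)) *
        ((∏ i ∈ Finset.Ioc k n, (i : R[X])) * Php h k) := by
  rw [Php.sum_S_eq h j hD n]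
  have hX : X * Php h n = ∑ s ∈ Finset.range (n+1),
      (n.choose s * s.factorial) • (Polynomial.C (h s) * (-1 : R[X])^s * (X:R[X])^(n+1-s)) := by
    rw [Php, Finset.mul_sum]
    refine Finset.sum_congr rfl fun s hs => ?_
    have hsle : s ≤ n := Nat.lt_succ_iff.mp (Finset.mem_range.mp hs)
    rw [mul_smul_comm]
    congr 1
    rw [show n+1-s = (n-s)+1 by omega, pow_succ]
    ring
  rw [hX, Php]
  have split : ∀ s ∈ Finset.range (n+2),
      ((n+1).choose s * s.factorial) • (Polynomial.C (h s) * (-1 : R[X])^s * (X:R[X])^(n+1-s))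
      = (n.choose s * s.factorial) • (Polynomial.C (h s) * (-1 : R[X])^s * (X:R[X])^(n+1-s))
        + (if 1 ≤ s then (n.choose (s-1) * s.factorial) •
            (Polynomial.C (h s) * (-1 : R[X])^s * (X:R[X])^(n+1-s)) else 0) := by
    intro s _
    rcases s with _ | t
    · simp
    · rw [if_pos (by omega)]
      rw [← add_smul]
      congr 1
      rw [Nat.choose_succ_succ, Nat.succ_sub_one]
      ring
  rw [Finset.sum_congr rfl split, Finset.sum_add_distrib]
  congr 1
  · rw [show n+2 = (n+1)+1 from rfl, Finset.sum_range_succ, Nat.choose_succ_self,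
      zero_mul, zero_smul, add_zero]
  · rw [Finset.sum_ite, Finset.sum_const_zero, add_zero]
    apply Finset.sum_congr
    · ext x
      simp only [Finset.mem_filter, Finset.mem_range, Finset.mem_Icc]
      omega
    · intros; rfl

lemma Jmat.charpoly_eq_Php (h j : ℕ → R) (h0 : h 0 = 1) (j1 : j 1 = 1)
    (hD : ∀ m : ℕ, 1 ≤ m → m • h m = ∑ r ∈ Finset.Icc 1 m, j r * h (m - r)) :
    ∀ n : ℕ, (Jmat j n).charpoly = Php h n := by
  intro n
  induction n using Nat.strong_induction_on with
  | _ n ih =>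
    match n, ih with
    | 0, _ =>
      rw [Matrix.charpoly, Matrix.det_isEmpty, Php]
      simp [h0]
    | (m+1), ih =>
      rw [Jmat.charpoly_rec]
      have hsub : ∀ k ∈ Finset.range (m+1),
          (-1 : R[X])^(m + k) *
            (if k = m then X - Polynomial.C (j 1) else -Polynomial.C (j (m - k + 1))) *
            ((∏ i ∈ Finset.Ioc k m, (i : R[X])) * (Jmat j k).charpoly)
          = (-1 : R[X])^(m + k) *
            (if k = m then X - Polynomial.C (j 1) else -Polynomial.C (j (m - k + 1))) *
            ((∏ i ∈ Finset.Ioc k m, (i : R[X])) * Php h k) := by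
        intro k hk
        rw [ih k (Finset.mem_range.mp hk)]
      rw [Finset.sum_congr rfl hsub]
      rw [Php.key_identity h j hD m]
      rw [Finset.sum_range_succ, Finset.sum_range_succ]
      have hterm : ∀ k ∈ Finset.range m,
          (-1 : R[X])^(m + k) *
            (if k = m then X - Polynomial.C (j 1) else -Polynomial.C (j (m - k + 1))) *
            ((∏ i ∈ Finset.Ioc k m, (i : R[X])) * Php h k)
          = (-1 : R[X])^(m+k+1) * Polynomial.C (j (m+1-k)) *
            ((∏ i ∈ Finset.Ioc k m, (i : R[X])) * Php h k) := by
        intro k hk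
        have hkm : k < m := Finset.mem_range.mp hk
        rw [if_neg (by omega), show m+1-k = m-k+1 by omega, pow_succ]
        ring
      rw [Finset.sum_congr rfl hterm]
      rw [if_pos rfl, j1, Polynomial.C_1, Finset.Ioc_self, Finset.prod_empty, one_mul]
      rw [show m+1-m = 1 by omega, j1, Polynomial.C_1]
      have hs1 : ((-1 : R[X]))^(m+m) = 1 := by
        rw [← two_mul, pow_mul]; norm_num
      have hs2 : ((-1 : R[X]))^(m+m+1) = -1 := by
        rw [pow_succ, hs1, one_mul]
      rw [hs1, hs2]
      ring

end CharpolyJmatAux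

/-- Theorem 2.3: if `h 0 = 1`, `j 1 = 1` and (D1) holds, then the characteristic
polynomial of `J_n(j̄)` equals `∑_{r=0}^n C(n,r) * r! • (h r * (-1)^r * x^(n-r))`. -/
theorem charpoly_Jmat {R : Type*} [CommRing R] (h j : ℕ → R)
    (h0 : h 0 = 1) (j1 : j 1 = 1)
    (hD : ∀ n : ℕ, 1 ≤ n → n • h n = ∑ r ∈ Finset.Icc 1 n, j r * h (n - r))
    (n : ℕ) (hn : 1 ≤ n) :
    (Jmat j n).charpoly =
      ∑ r ∈ Finset.range (n + 1),
        (n.choose r * r.factorial) •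
          (Polynomial.C (h r) * (-1 : R[X]) ^ r * (Polynomial.X : R[X]) ^ (n - r)) := by
  rw [Jmat.charpoly_eq_Php h j h0 j1 hD n, Php]
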